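/- Let w be a nonempty cyclic word over an alphabet of oriented edges and let e₀ be a letter occurring in w. Then by a finite sequence of edge-surgeries (each deleting a cyclic segment between two consecutive occurrences of a repeated letter, chosen so as not to delete a fixed occurrence of e₀) one obtains a cyclic word w' such that: (1) e₀ occurs in w', (2) every letter occurs in w' at most once, and (3) every letter occurring in w' also occurs in w. -/

import Mathlib

/-!
Rotate `w` so that it starts at the distinguished occurrence of `e₀`. If the word is not yet
duplicate-free, some letter `e` has two consecutive occurrences (no `e` in between) after that
position; cutting out the segment between them never deletes the leading `e₀`, and it shortens the
word and introduces no new letters. Induction on the length finishes the proof.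
-/

/-- One step of edge-surgery on a cyclic word: delete the cyclic segment from one
occurrence of a repeated letter `e` up to (but not including) the next occurrence. -/
def EdgeSurgery {α : Type*} (w w' : List α) : Prop :=
  ∃ (e : α) (s t : List α), e ∉ s ∧ w ~r (e :: s ++ e :: t) ∧ w' = e :: t

namespace List

variable {α : Type*}

theorem exists_eq_append_cons_append_cons_of_not_nodup [DecidableEq α] {l : List α}
    (h : ¬l.Nodup) : ∃ (a : List α) (e : α) (s t : List α), e ∉ s ∧ l = a ++ e :: s ++ e :: t := by
  obtain ⟨e, he⟩ := exists_duplicate_iff_not_nodup.2 h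
  clear h
  induction he with
  | cons_mem hm =>
    obtain ⟨s, t, hs, rfl, -⟩ := exists_erase_eq hm
    exact ⟨[], _, s, t, hs, rfl⟩
  | @cons_duplicate b _ _ ih =>
    obtain ⟨a, e, s, t, hs, rfl⟩ := ih
    exact ⟨b :: a, e, s, t, hs, rfl⟩

theorem exists_isRotated_cons_of_mem {a : α} {l : List α} (h : a ∈ l) :
    ∃ u, l ~r a :: u := by
  obtain ⟨s, t, rfl⟩ := append_of_mem h
  exact ⟨t ++ s, by simpa using isRotated_append (l := s) (l' := a :: t)⟩

end List

namespace EdgeSurgery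

variable {α : Type*} {w v w' : List α}

theorem of_isRotated (hwv : w ~r v) (h : EdgeSurgery v w') : EdgeSurgery w w' := by
  obtain ⟨e, s, t, hs, hv, rfl⟩ := h
  exact ⟨e, s, t, hs, hwv.trans hv, rfl⟩

theorem append_cons_append_cons {e : α} {s : List α} (hs : e ∉ s) (a t : List α) :
    EdgeSurgery (a ++ e :: s ++ e :: t) (e :: (t ++ a)) :=
  ⟨e, s, t ++ a, hs, by simpa using List.isRotated_append (l := a) (l' := e :: s ++ e :: t), rfl⟩

theorem subset (h : EdgeSurgery w w') : w' ⊆ w := by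
  obtain ⟨e, s, t, -, hw, rfl⟩ := h
  exact fun b hb => hw.perm.symm.subset (by simp_all)

theorem length_lt (h : EdgeSurgery w w') : w'.length < w.length := by
  obtain ⟨e, s, t, -, hw, rfl⟩ := h
  simp [hw.perm.length_eq]

theorem exists_of_mem_of_not_nodup [DecidableEq α] {e₀ : α} (h₀ : e₀ ∈ w) (hw : ¬w.Nodup) :
    ∃ w', EdgeSurgery w w' ∧ e₀ ∈ w' := by
  obtain ⟨u, hu⟩ := List.exists_isRotated_cons_of_mem h₀
  obtain ⟨a, e, s, t, hs, hsplit⟩ :=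
    List.exists_eq_append_cons_append_cons_of_not_nodup (hu.nodup_iff.not.1 hw)
  refine ⟨e :: (t ++ a), of_isRotated (hsplit ▸ hu) (append_cons_append_cons hs a t), ?_⟩
  -- `e₀` heads the rotated word, so it is either the first `e` or the first letter of `a`.
  cases a with
  | nil => simp_all
  | cons b a => simp_all

end EdgeSurgery

/-- Lemma `Surgery3`: by finitely many edge-surgeries one reaches a cyclic word in
which a prescribed letter `e₀` still occurs, every letter occurs at most once, and
all letters come from the original word. -/
theorem stmt_8 {α : Type*} [DecidableEq α] (w : List α) (e₀ : α) (h : e₀ ∈ w) :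
    ∃ w' : List α, Relation.ReflTransGen EdgeSurgery w w' ∧
      e₀ ∈ w' ∧ w'.Nodup ∧ ∀ a ∈ w', a ∈ w := by
  by_cases hnd : w.Nodup
  · exact ⟨w, .refl, h, hnd, fun _ ha => ha⟩
  obtain ⟨v, hwv, hv⟩ := EdgeSurgery.exists_of_mem_of_not_nodup h hnd
  obtain ⟨w', hvw', h₀, hnd', hsub⟩ := stmt_8 v e₀ hv
  exact ⟨w', .head hwv hvw', h₀, hnd', fun a ha => hwv.subset (hsub a ha)⟩
termination_by w.length
decreasing_by exact hwv.length_lt
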